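/- For ρ ∈ (0,1], define G_{2,ρ} = π(D_ρ) where D_ρ = {z ∈ C^2 : |z1| < 1, |z2| < 1, |z1·z2| < ρ} and π(z) = (z1+z2, z1·z2). Then for any ω with 0 < |ω| ≤ 1, Φ_ω(E) ⊆ G_{2,|ω|}, where Φ_ω(x) = (x1 + ω·x2, ω·x3). -/

import Mathlib

open Complex

def tetrablockE : Set (ℂ × ℂ × ℂ) :=
  {x | ‖x.1 - (starRingEnd ℂ) x.2.1 * x.2.2‖ +
       ‖x.2.1 - (starRingEnd ℂ) x.1 * x.2.2‖ +
       (‖x.2.2‖) ^ 2 < 1}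

def Drho (ρ : ℝ) : Set (ℂ × ℂ) :=
  {z | ‖z.1‖ < 1 ∧ ‖z.2‖ < 1 ∧ ‖z.1 * z.2‖ < ρ}

def G2rho (ρ : ℝ) : Set (ℂ × ℂ) :=
  (fun z : ℂ × ℂ => (z.1 + z.2, z.1 * z.2)) '' Drho ρ

/-!
Write `s = z₁ + z₂`, `p = z₁z₂`. The condition `‖s - s̄p‖ + ‖p‖² < 1` forces both roots of
`λ² - sλ + p` into the unit disc, since `s - s̄p = z₁(1 - ‖z₂‖²) + z₂(1 - ‖z₁‖²)`.
For `x ∈ E`, `s = x₁ + ωx₂` and `p = ωx₃`,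
`s - s̄p = (x₁ - x̄₂x₃) + ω(x₂ - x̄₁x₃) + (1 - ‖ω‖²) x̄₂x₃`. Combining the defining inequality
of `E` with the triangle inequality gives `2‖x₃‖(‖x₂‖ - ‖x₃‖) ≤ ‖x₂ - x̄₁x₃‖`, and this makes
the resulting bound on `‖s - s̄p‖ + ‖p‖²` largest at `‖ω‖ = 1`, where it is the defining
inequality of `E`. Finally `‖p‖ = ‖ω‖‖x₃‖ < ‖ω‖`.
-/

open ComplexConjugate

lemma norm_mul_ofReal_one_sub_norm_sq (z w : ℂ) :
    ‖z * ((1 - ‖w‖ ^ 2 : ℝ) : ℂ)‖ = ‖z‖ * |1 - ‖w‖ ^ 2| := by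
  rw [norm_mul, Complex.norm_real, Real.norm_eq_abs]

lemma add_sub_conj_add_mul_mul (z w : ℂ) :
    z + w - conj (z + w) * (z * w) =
      z * ((1 - ‖w‖ ^ 2 : ℝ) : ℂ) + w * ((1 - ‖z‖ ^ 2 : ℝ) : ℂ) := by
  push_cast
  rw [← Complex.mul_conj' z, ← Complex.mul_conj' w, map_add]
  ring

lemma norm_lt_one_of_norm_add_sub_conj_add_mul_mul_add_sq_lt_one {z w : ℂ}
    (h : ‖z + w - conj (z + w) * (z * w)‖ + ‖z * w‖ ^ 2 < 1) : ‖z‖ < 1 := by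
  by_contra! hz
  rw [norm_mul] at h
  have hzw : ‖z‖ * ‖w‖ < 1 := by nlinarith [norm_nonneg (z + w - conj (z + w) * (z * w))]
  have hw : ‖w‖ < 1 := by nlinarith [norm_nonneg w]
  have hlower : (‖z‖ + ‖w‖) * (1 - ‖z‖ * ‖w‖) ≤ ‖z + w - conj (z + w) * (z * w)‖ := by
    rw [add_sub_conj_add_mul_mul]
    have := norm_sub_norm_le (z * ((1 - ‖w‖ ^ 2 : ℝ) : ℂ)) (-(w * ((1 - ‖z‖ ^ 2 : ℝ) : ℂ)))
    rw [sub_neg_eq_add, norm_neg, norm_mul_ofReal_one_sub_norm_sq,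
      norm_mul_ofReal_one_sub_norm_sq, abs_of_nonneg (by nlinarith [norm_nonneg w]),
      abs_of_nonpos (by nlinarith)] at this
    nlinarith
  -- `(u + v)(1 - uv) + u²v² - 1 = (1 - uv)(u - 1)(1 - v)`
  nlinarith [mul_nonneg (mul_nonneg (sub_nonneg.2 hz) (sub_nonneg.2 hw.le))
    (sub_nonneg.2 hzw.le)]

lemma mk_mem_G2rho_of_norm_sub_conj_mul_add_sq_lt_one {s p : ℂ} {ρ : ℝ}
    (h : ‖s - conj s * p‖ + ‖p‖ ^ 2 < 1) (hp : ‖p‖ < ρ) : (s, p) ∈ G2rho ρ := by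
  obtain ⟨d, hd⟩ := IsAlgClosed.exists_pow_nat_eq (s ^ 2 - 4 * p) two_pos
  have hroots : ∀ {z w : ℂ}, z + w = s → z * w = p → ‖z‖ < 1 := fun hs hp' =>
    norm_lt_one_of_norm_add_sub_conj_add_mul_mul_add_sq_lt_one (by rwa [hs, hp'])
  have hsum : (s + d) / 2 + (s - d) / 2 = s := by ring
  have hprod : (s + d) / 2 * ((s - d) / 2) = p := by linear_combination (-1 / 4 : ℂ) * hd
  refine ⟨((s + d) / 2, (s - d) / 2), ⟨hroots hsum hprod, ?_, by rwa [hprod]⟩, ?_⟩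
  · exact hroots (by rw [add_comm, hsum]) (by rw [mul_comm, hprod])
  · simp only [hsum, hprod]

lemma norm_le_norm_sub_conj_mul_add (u v w : ℂ) : ‖u‖ ≤ ‖u - conj v * w‖ + ‖v‖ * ‖w‖ := by
  have := norm_le_norm_add_norm_sub' u (u - conj v * w)
  rw [sub_sub_cancel, norm_mul, Complex.norm_conj] at this
  linarith

lemma norm_snd_snd_lt_one_of_mem_tetrablockE {x : ℂ × ℂ × ℂ} (hx : x ∈ tetrablockE) :
    ‖x.2.2‖ < 1 := by
  have hE : ‖x.1 - conj x.2.1 * x.2.2‖ + ‖x.2.1 - conj x.1 * x.2.2‖ + ‖x.2.2‖ ^ 2 < 1 := hx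
  nlinarith [norm_nonneg (x.1 - conj x.2.1 * x.2.2), norm_nonneg (x.2.1 - conj x.1 * x.2.2),
    norm_nonneg x.2.2]

lemma two_mul_norm_mul_sub_le_of_mem_tetrablockE {x : ℂ × ℂ × ℂ} (hx : x ∈ tetrablockE) :
    2 * ‖x.2.2‖ * (‖x.2.1‖ - ‖x.2.2‖) ≤ ‖x.2.1 - conj x.1 * x.2.2‖ := by
  obtain ⟨x₁, x₂, x₃⟩ := x
  set a := ‖x₁ - conj x₂ * x₃‖
  set b := ‖x₂ - conj x₁ * x₃‖
  set t := ‖x₃‖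
  have hE : a + b + t ^ 2 < 1 := hx
  have h₁ : ‖x₁‖ ≤ a + ‖x₂‖ * t := norm_le_norm_sub_conj_mul_add x₁ x₂ x₃
  have h₂ : ‖x₂‖ ≤ b + ‖x₁‖ * t := norm_le_norm_sub_conj_mul_add x₂ x₁ x₃
  have ht : 0 ≤ t := norm_nonneg _
  have hb : 0 ≤ b := norm_nonneg _
  have ht₁ : t < 1 := norm_snd_snd_lt_one_of_mem_tetrablockE hx
  -- substitute `h₁` into `h₂`, then bound `a` using `hE`
  have hcubic : (‖x₂‖ - t) * (1 - t ^ 2) ≤ b * (1 - t) := by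
    nlinarith [mul_le_mul_of_nonneg_right h₁ ht]
  have hquad : (‖x₂‖ - t) * (1 + t) ≤ b := by
    have h := hcubic
    rw [show (1 - t ^ 2) = (1 + t) * (1 - t) by ring, ← mul_assoc] at h
    exact le_of_mul_le_mul_right h (by linarith)
  show 2 * t * (‖x₂‖ - t) ≤ b
  nlinarith [mul_nonneg (sub_nonneg.2 ht₁.le) (abs_nonneg (‖x₂‖ - t)), le_abs_self (‖x₂‖ - t)]

lemma norm_add_mul_sub_conj_mul_le (ω x₁ x₂ x₃ : ℂ) :
    ‖x₁ + ω * x₂ - conj (x₁ + ω * x₂) * (ω * x₃)‖ ≤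
      ‖x₁ - conj x₂ * x₃‖ + ‖ω‖ * ‖x₂ - conj x₁ * x₃‖ +
        ‖conj x₂ * x₃‖ * |1 - ‖ω‖ ^ 2| := by
  have hid : x₁ + ω * x₂ - conj (x₁ + ω * x₂) * (ω * x₃) =
      (x₁ - conj x₂ * x₃) + ω * (x₂ - conj x₁ * x₃) +
        conj x₂ * x₃ * ((1 - ‖ω‖ ^ 2 : ℝ) : ℂ) := by
    push_cast
    rw [← Complex.mul_conj' ω, map_add, map_mul]
    ring
  rw [hid, ← norm_mul_ofReal_one_sub_norm_sq, ← norm_mul]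
  exact norm_add₃_le

lemma norm_sub_conj_mul_add_sq_lt_one_of_mem_tetrablockE {ω : ℂ} (hω : ‖ω‖ ≤ 1)
    {x : ℂ × ℂ × ℂ} (hx : x ∈ tetrablockE) :
    ‖x.1 + ω * x.2.1 - conj (x.1 + ω * x.2.1) * (ω * x.2.2)‖ + ‖ω * x.2.2‖ ^ 2 < 1 := by
  have hE : ‖x.1 - conj x.2.1 * x.2.2‖ + ‖x.2.1 - conj x.1 * x.2.2‖ + ‖x.2.2‖ ^ 2 < 1 := hx
  have hbound := norm_add_mul_sub_conj_mul_le ω x.1 x.2.1 x.2.2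
  have hkey := two_mul_norm_mul_sub_le_of_mem_tetrablockE hx
  rw [norm_mul, Complex.norm_conj, abs_of_nonneg (by nlinarith [norm_nonneg ω])] at hbound
  rw [norm_mul]
  -- as a function of `r = ‖ω‖` the bound is at most its value at `r = 1`
  -- minus `(1 - r)² ‖x₂ - x̄₁x₃‖ / 2`
  nlinarith [mul_nonneg (sq_nonneg (1 - ‖ω‖)) (norm_nonneg (x.2.1 - conj x.1 * x.2.2)),
    mul_le_mul_of_nonneg_left hkey (by nlinarith [norm_nonneg ω] : 0 ≤ 1 - ‖ω‖ ^ 2)]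

theorem Phi_maps_tetrablock_into_G2rho (ω : ℂ)
    (hω0 : 0 < ‖ω‖) (hω1 : ‖ω‖ ≤ 1) :
    (fun x : ℂ × ℂ × ℂ => (x.1 + ω * x.2.1, ω * x.2.2)) '' tetrablockE ⊆
      G2rho ‖ω‖ := by
  rintro _ ⟨x, hx, rfl⟩
  refine mk_mem_G2rho_of_norm_sub_conj_mul_add_sq_lt_one
    (norm_sub_conj_mul_add_sq_lt_one_of_mem_tetrablockE hω1 hx) ?_
  rw [norm_mul]
  exact mul_lt_of_lt_one_right hω0 (norm_snd_snd_lt_one_of_mem_tetrablockE hx)
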